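/- On the Heisenberg group Heis_{2n-1} = ℂ^{n-1} × ℝ with group law (ζ,v)(ζ',v') = (ζ+ζ', v+v'-2Im(ζ*ζ')), the function d'_Cyg defined by left-invariance and d'_Cyg((0,0),(ζ,v)) = ((|ζ|⁴+v²)^{1/2} + |ζ|²)^{1/2} is a distance (satisfies the triangle inequality), and it is equivalent to the Cygan distance d_Cyg (defined by d_Cyg((0,0),(ζ,v)) = (|ζ|⁴+v²)^{1/4}): d_Cyg ≤ d'_Cyg ≤ √2·d_Cyg. -/

import Mathlib

noncomputable section

/-- The Heisenberg group `Heis_{2n-1} = ℂ^{n-1} × ℝ` (`m = n - 1`). -/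
abbrev Heis (m : ℕ) := EuclideanSpace ℂ (Fin m) × ℝ

/-- The Heisenberg group law `(ζ,v)(ζ',v') = (ζ+ζ', v+v'-2 Im ζ*ζ')`. -/
def heisMul {m : ℕ} (p q : Heis m) : Heis m :=
  (p.1 + q.1, p.2 + q.2 - 2 * (inner ℂ p.1 q.1 : ℂ).im)

/-- The Heisenberg group inverse. -/
def heisInv {m : ℕ} (p : Heis m) : Heis m := (-p.1, -p.2)

/-- The Cygan distance: the left-invariant function with
`d_Cyg((0,0),(ζ,v)) = (|ζ|⁴ + v²)^{1/4}`. -/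
def dCyg {m : ℕ} (p q : Heis m) : ℝ :=
  Real.sqrt (Real.sqrt (‖(heisMul (heisInv p) q).1‖ ^ 4 + (heisMul (heisInv p) q).2 ^ 2))

/-- The modified Cygan distance: the left-invariant function with
`d'_Cyg((0,0),(ζ,v)) = ((|ζ|⁴ + v²)^{1/2} + |ζ|²)^{1/2}`. -/
def dCyg' {m : ℕ} (p q : Heis m) : ℝ :=
  Real.sqrt (Real.sqrt (‖(heisMul (heisInv p) q).1‖ ^ 4 + (heisMul (heisInv p) q).2 ^ 2)
    + ‖(heisMul (heisInv p) q).1‖ ^ 2)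

namespace aux16
variable {m : ℕ}

def K (g : Heis m) : ℂ := ((‖g.1‖^2 : ℝ) : ℂ) - g.2 * Complex.I

lemma absK (g : Heis m) : ‖K g‖ = Real.sqrt (‖g.1‖^4 + g.2^2) := by
  rw [Complex.norm_def, Complex.normSq_apply]
  simp only [K, Complex.sub_re, Complex.ofReal_re, Complex.mul_re, Complex.ofReal_im,
    Complex.I_re, Complex.I_im, Complex.sub_im, Complex.mul_im]
  ring_nf

lemma keyK (g h : Heis m) :
    K (heisMul g h) = K g + K h + 2 * (inner ℂ g.1 h.1 : ℂ) := by
  have hn : ‖g.1 + h.1‖^2 = ‖g.1‖^2 + 2 * (inner ℂ g.1 h.1 : ℂ).re + ‖h.1‖^2 := by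
    have := @norm_add_sq ℂ _ _ _ _ g.1 h.1
    simpa using this
  apply Complex.ext
  · simp [K, heisMul, hn]
    ring
  · simp [K, heisMul, ← Complex.ofReal_pow]
    ring

lemma heis_assoc (p q r : Heis m) :
    heisMul (heisInv p) r = heisMul (heisMul (heisInv p) q) (heisMul (heisInv q) r) := by
  have h1 : (inner ℂ q.1 q.1 : ℂ).im = 0 := by
    simp [inner_self_eq_norm_sq_to_K, ← Complex.ofReal_pow]
  have h2 : (inner ℂ q.1 p.1 : ℂ).im = -(inner ℂ p.1 q.1 : ℂ).im := by
    rw [← inner_conj_symm, Complex.conj_im]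
  apply Prod.ext
  · simp [heisMul, heisInv]
  · simp only [heisMul, heisInv, inner_neg_left, inner_add_left, inner_add_right,
      inner_neg_right, Complex.neg_im, Complex.add_im]
    rw [h2] at *
    ring_nf
    rw [h1]
    ring

lemma heis_symm (p q : Heis m) :
    heisMul (heisInv q) p = heisInv (heisMul (heisInv p) q) := by
  have h2 : (inner ℂ q.1 p.1 : ℂ).im = -(inner ℂ p.1 q.1 : ℂ).im := by
    rw [← inner_conj_symm, Complex.conj_im]
  apply Prod.ext
  · simp [heisMul, heisInv]
  · simp only [heisMul, heisInv, inner_neg_left, Complex.neg_im]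
    rw [h2]; ring

lemma heis_self (p : Heis m) : heisMul (heisInv p) p = (0, 0) := by
  have h1 : (inner ℂ p.1 p.1 : ℂ).im = 0 := by
    simp [inner_self_eq_norm_sq_to_K, ← Complex.ofReal_pow]
  apply Prod.ext
  · simp [heisMul, heisInv]
  · simp only [heisMul, heisInv, inner_neg_left, Complex.neg_im, h1]
    ring

/-- `A g = √(‖ζ‖⁴ + v²)`. -/
def A (g : Heis m) : ℝ := Real.sqrt (‖g.1‖^4 + g.2^2)

lemma A_nonneg (g : Heis m) : 0 ≤ A g := Real.sqrt_nonneg _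

lemma sq_le_A (g : Heis m) : ‖g.1‖^2 ≤ A g := by
  have : ‖g.1‖^2 = Real.sqrt ((‖g.1‖^2)^2) := (Real.sqrt_sq (sq_nonneg _)).symm
  rw [this]
  apply Real.sqrt_le_sqrt
  nlinarith [sq_nonneg g.2]

def N2 (g : Heis m) : ℝ := A g + ‖g.1‖^2

lemma N2_nonneg (g : Heis m) : 0 ≤ N2 g := add_nonneg (A_nonneg g) (sq_nonneg _)

lemma dCyg'_eq (p q : Heis m) : dCyg' p q = Real.sqrt (N2 (heisMul (heisInv p) q)) := rfl

lemma dCyg_eq (p q : Heis m) : dCyg p q = Real.sqrt (A (heisMul (heisInv p) q)) := rfl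

lemma A_mul_le (g h : Heis m) :
    A (heisMul g h) ≤ A g + A h + 2 * (‖g.1‖ * ‖h.1‖) := by
  unfold A
  rw [← absK, ← absK, ← absK, keyK]
  calc ‖K g + K h + 2 * (inner ℂ g.1 h.1 : ℂ)‖
      ≤ ‖K g‖ + ‖K h‖ + ‖2 * (inner ℂ g.1 h.1 : ℂ)‖ := by
        exact (norm_add_le _ _).trans (by gcongr; exact norm_add_le _ _)
    _ ≤ ‖K g‖ + ‖K h‖ + 2 * (‖g.1‖ * ‖h.1‖) := by
        gcongr
        rw [norm_mul]
        simp only [Complex.norm_two]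
        gcongr
        exact norm_inner_le_norm (𝕜 := ℂ) g.1 h.1

lemma cross_le (g h : Heis m) :
    2 * (‖g.1‖ * ‖h.1‖) ≤ Real.sqrt (N2 g) * Real.sqrt (N2 h) := by
  have h1 : (2 * (‖g.1‖ * ‖h.1‖))^2 ≤ N2 g * N2 h := by
    have hg : 2 * ‖g.1‖^2 ≤ N2 g := by
      have := sq_le_A g; unfold N2; linarith
    have hh : 2 * ‖h.1‖^2 ≤ N2 h := by
      have := sq_le_A h; unfold N2; linarith
    nlinarith [sq_nonneg (‖g.1‖*‖h.1‖), norm_nonneg g.1, norm_nonneg h.1]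
  have := Real.sqrt_le_sqrt h1
  rwa [Real.sqrt_sq (by positivity), Real.sqrt_mul (N2_nonneg g)] at this

lemma N2_mul_le (g h : Heis m) :
    N2 (heisMul g h) ≤ (Real.sqrt (N2 g) + Real.sqrt (N2 h))^2 := by
  have hA := A_mul_le g h
  have hc := cross_le g h
  have hn : ‖(heisMul g h).1‖^2 ≤ (‖g.1‖ + ‖h.1‖)^2 := by
    have : ‖(heisMul g h).1‖ ≤ ‖g.1‖ + ‖h.1‖ := norm_add_le g.1 h.1
    nlinarith [norm_nonneg (heisMul g h).1]
  have hsg : Real.sqrt (N2 g) ^ 2 = N2 g := Real.sq_sqrt (N2_nonneg g)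
  have hsh : Real.sqrt (N2 h) ^ 2 = N2 h := Real.sq_sqrt (N2_nonneg h)
  have hexp : (Real.sqrt (N2 g) + Real.sqrt (N2 h))^2
      = N2 g + N2 h + 2 * (Real.sqrt (N2 g) * Real.sqrt (N2 h)) := by
    ring_nf; nlinarith [hsg, hsh]
  unfold N2 at *
  nlinarith [hc]

end aux16

open aux16 in
/-- The modified Cygan function `d'_Cyg` on the Heisenberg group is a distance
(separates points, is symmetric, and satisfies the triangle inequality), and it is
equivalent to the Cygan distance: `d_Cyg ≤ d'_Cyg ≤ √2 d_Cyg`. -/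
theorem stmt_16 (m : ℕ) :
    (∀ p q : Heis m, dCyg' p q = 0 ↔ p = q) ∧
    (∀ p q : Heis m, dCyg' p q = dCyg' q p) ∧
    (∀ p q r : Heis m, dCyg' p r ≤ dCyg' p q + dCyg' q r) ∧
    (∀ p q : Heis m, dCyg p q ≤ dCyg' p q ∧ dCyg' p q ≤ Real.sqrt 2 * dCyg p q) := by
  refine ⟨?_, ?_, ?_, ?_⟩
  · intro p q
    constructor
    · intro h
      rw [dCyg'_eq] at h
      have h0 : N2 (heisMul (heisInv p) q) = 0 := by
        have := Real.sqrt_eq_zero (N2_nonneg _) |>.mp h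
        exact this
      set g := heisMul (heisInv p) q with hg
      have hA0 : A g = 0 ∧ ‖g.1‖^2 = 0 := by
        constructor <;> nlinarith [A_nonneg g, sq_nonneg ‖g.1‖, h0, N2_nonneg g,
          (show A g + ‖g.1‖^2 = 0 from h0)]
      have h1 : g.1 = 0 := by
        have hn : ‖g.1‖ = 0 := pow_eq_zero_iff two_ne_zero |>.mp hA0.2
        exact norm_eq_zero.mp hn
      have h2 : g.2 = 0 := by
        have hA := hA0.1
        unfold A at hA
        have : ‖g.1‖^4 + g.2^2 = 0 := by
          have hnn : (0:ℝ) ≤ ‖g.1‖^4 + g.2^2 := by positivity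
          exact (Real.sqrt_eq_zero hnn).mp hA
        nlinarith [sq_nonneg g.2, pow_le_pow_left₀ (norm_nonneg g.1) (le_refl ‖g.1‖) 4]
      -- from g = 0 deduce p = q
      have hq1 : q.1 = p.1 := by
        have : -p.1 + q.1 = 0 := h1
        have := neg_add_eq_zero.mp this
        exact this.symm
      have himm : (inner ℂ (-p.1) q.1 : ℂ).im = 0 := by
        rw [hq1]
        simp [inner_self_eq_norm_sq_to_K, ← Complex.ofReal_pow]
      have hq2 : q.2 = p.2 := by
        have h2' : -p.2 + q.2 - 2 * (inner ℂ (-p.1) q.1 : ℂ).im = 0 := h2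
        rw [himm] at h2'
        linarith
      exact Prod.ext hq1.symm hq2.symm |>.symm ▸ (Prod.ext hq1 hq2 ▸ rfl)
    · intro h
      subst h
      rw [dCyg'_eq, heis_self]
      simp [N2, A]
  · intro p q
    rw [dCyg'_eq, dCyg'_eq, heis_symm p q]
    congr 1
    simp [N2, A, heisInv]
  · intro p q r
    rw [dCyg'_eq, dCyg'_eq, dCyg'_eq, heis_assoc p q r]
    have := N2_mul_le (heisMul (heisInv p) q) (heisMul (heisInv q) r)
    have h2 := Real.sqrt_le_sqrt this
    rwa [Real.sqrt_sq (by positivity)] at h2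
  · intro p q
    rw [dCyg_eq, dCyg'_eq]
    set g := heisMul (heisInv p) q
    constructor
    · apply Real.sqrt_le_sqrt
      unfold N2
      nlinarith [sq_nonneg ‖g.1‖]
    · have h1 : N2 g ≤ 2 * A g := by
        have := sq_le_A g; unfold N2; linarith
      calc Real.sqrt (N2 g) ≤ Real.sqrt (2 * A g) := Real.sqrt_le_sqrt h1
        _ = Real.sqrt 2 * Real.sqrt (A g) := Real.sqrt_mul (by norm_num) _
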